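/- arXiv:1304.4986 — 8 statements merged into one kernel-verified Lean document; each statement's English description precedes it below -/
import Mathlib

section
/- Let n ≥ 2 be even. Then the directed cycle C_n has no commutative binary polymorphism: there is no polymorphism f : (Z/nZ)² → Z/nZ of C_n with f(x,y) = f(y,x) for all x, y. -/
/-!
A polymorphism of a directed cycle commutes with the diagonal shift: `f (x + k) (y + k) = f x y + k`.
For `n = 2m`, shifting `(0, m)` by `m` gives `(m, 0)`, so `f m 0 = f 0 m + m`; commutativity then
forces `m = 0` in `ZMod n`, which fails since `0 < m < n`.
-/

section Shift

variable {R : Type*} [AddGroupWithOne R] {f : R → R → R}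

theorem map_add_natCast_add_natCast
    (hf : ∀ a b c d : R, b = a + 1 → d = c + 1 → f b d = f a c + 1) (k : ℕ) (x y : R) :
    f (x + k) (y + k) = f x y + k := by
  induction k with
  | zero => simp
  | succ k ih =>
    simp only [Nat.cast_succ, ← add_assoc]
    rw [hf (x + k) _ (y + k) _ rfl rfl, ih]

theorem natCast_eq_zero_of_comm_of_add_self
    (hf : ∀ a b c d : R, b = a + 1 → d = c + 1 → f b d = f a c + 1)
    (hcomm : ∀ x y : R, f x y = f y x) {m : ℕ} (hm : (m : R) + m = 0) : (m : R) = 0 := by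
  have hshift := map_add_natCast_add_natCast hf m 0 m
  rw [zero_add, hm, hcomm] at hshift
  exact left_eq_add.mp hshift

end Shift

theorem ZMod.natCast_half_add_self {n : ℕ} (heven : Even n) :
    ((n / 2 : ℕ) : ZMod n) + (n / 2 : ℕ) = 0 := by
  rw [← Nat.cast_add, ← two_mul, Nat.two_mul_div_two_of_even heven, ZMod.natCast_self]

theorem ZMod.natCast_half_ne_zero {n : ℕ} (hn : 2 ≤ n) : ((n / 2 : ℕ) : ZMod n) ≠ 0 := by
  rw [Ne, ZMod.natCast_eq_zero_iff]
  exact Nat.not_dvd_of_pos_of_lt (by omega) (by omega)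

/-- For even `n ≥ 2` the directed cycle `C_n` has no commutative binary polymorphism. -/
theorem stmt_4 (n : ℕ) (hn : 2 ≤ n) (heven : Even n) :
    ¬ ∃ f : ZMod n → ZMod n → ZMod n,
      (∀ a b c d : ZMod n, b = a + 1 → d = c + 1 → f b d = f a c + 1) ∧
      (∀ x y : ZMod n, f x y = f y x) := by
  rintro ⟨f, hf, hcomm⟩
  exact ZMod.natCast_half_ne_zero hn <|
    natCast_eq_zero_of_comm_of_add_self hf hcomm (ZMod.natCast_half_add_self heven)
end

section
/- Let n ≥ 2. Then the directed cycle C_n has no totally symmetric n-ary polymorphism: there is no n-ary polymorphism t of C_n such that t(x₁,...,xₙ) = t(y₁,...,yₙ) whenever {x₁,...,xₙ} = {y₁,...,yₙ} as sets. In particular, any n-ary polymorphism t satisfies t(0,1,...,n−1) ≠ t(1,2,...,n−1,0). -/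
/-! A polymorphism `t` of the directed cycle satisfies `t (a + 1) = t a + 1`, so it never takes
the same value on a tuple and on its shift by one. For the tuple `(0, 1, …, n-1)` both the tuple
and its shift enumerate all of `ℤ/nℤ`, hence a totally symmetric `t` would have to agree on them. -/

theorem apply_ne_apply_add_one {ι R : Type*} [AddMonoidWithOne R] [IsLeftCancelAdd R]
    [NeZero (1 : R)] {t : (ι → R) → R}
    (ht : ∀ a b : ι → R, (∀ i, b i = a i + 1) → t b = t a + 1) (a : ι → R) :
    t a ≠ t (fun i => a i + 1) := by
  rw [ht a _ fun _ => rfl]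
  exact fun h => one_ne_zero (left_eq_add.mp h)

theorem ZMod.surjective_finCast (n : ℕ) [NeZero n] :
    Function.Surjective (fun i : Fin n => (i : ZMod n)) :=
  fun z => ⟨⟨z.val, z.val_lt⟩, ZMod.natCast_zmod_val z⟩

/-- For `n ≥ 2`, the directed cycle `C_n` has no totally symmetric `n`-ary polymorphism.
In particular any `n`-ary polymorphism `t` satisfies
`t (0,1,…,n-1) ≠ t (1,2,…,n-1,0)`. -/
theorem stmt_5 (n : ℕ) (hn : 2 ≤ n) :
    (¬ ∃ t : (Fin n → ZMod n) → ZMod n,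
        (∀ a b : Fin n → ZMod n, (∀ i, b i = a i + 1) → t b = t a + 1) ∧
        (∀ x y : Fin n → ZMod n, Set.range x = Set.range y → t x = t y)) ∧
    (∀ t : (Fin n → ZMod n) → ZMod n,
        (∀ a b : Fin n → ZMod n, (∀ i, b i = a i + 1) → t b = t a + 1) →
        t (fun i => (i : ZMod n)) ≠ t (fun i => (i : ZMod n) + 1)) := by
  have : Fact (1 < n) := ⟨hn⟩
  have shift_ne t ht := apply_ne_apply_add_one (t := t) ht (fun i : Fin n => (i : ZMod n))
  refine ⟨fun ⟨t, ht, hsym⟩ => shift_ne t ht (hsym _ _ ?_), shift_ne⟩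
  have hsurj := ZMod.surjective_finCast n
  rw [hsurj.range_eq]
  exact ((add_right_surjective 1).comp hsurj).range_eq.symm
end

section
/- For odd n ≥ 1, the directed cycle C_n admits a 2-semilattice polymorphism: a binary polymorphism · satisfying x·x = x, x·y = y·x, and x·(x·y) = x·y for all x, y. Concretely, with m = ⌊n/2⌋, the operation i·j defined to equal i if the least nonnegative residue of j − i modulo n is at most m, and j otherwise, is such a polymorphism. -/
/-!
The operation depends only on `j - i`, so it commutes with translation by `1`, i.e. it is a
polymorphism. For odd `n` no nonzero residue sits exactly half way around the cycle, so for
`i ≠ j` exactly one of `j - i` and `i - j` has value at most `n / 2`, which gives commutativity.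
Absorption holds because `i · j ∈ {i, j}`.
-/

namespace ZMod

lemma val_neg_le_half_iff {n : ℕ} (hn : Odd n) {a : ZMod n} (ha : a ≠ 0) :
    (-a).val ≤ n / 2 ↔ n / 2 < a.val := by
  have : NeZero n := ⟨hn.pos.ne'⟩
  have ha_pos : 0 < a.val := val_pos.2 ha
  have ha_lt : a.val < n := a.val_lt
  rw [neg_val, if_neg ha]
  obtain ⟨k, rfl⟩ := hn
  omega

end ZMod

def cycleSemilatticeOp (n : ℕ) (i j : ZMod n) : ZMod n :=
  if (j - i).val ≤ n / 2 then i else j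

namespace cycleSemilatticeOp

variable {n : ℕ}

lemma add_add (a c t : ZMod n) :
    cycleSemilatticeOp n (a + t) (c + t) = cycleSemilatticeOp n a c + t := by
  unfold cycleSemilatticeOp
  rw [add_sub_add_right_eq_sub]
  split_ifs <;> rfl

lemma self (x : ZMod n) : cycleSemilatticeOp n x x = x := by
  simp [cycleSemilatticeOp]

lemma comm (hn : Odd n) (x y : ZMod n) : cycleSemilatticeOp n x y = cycleSemilatticeOp n y x := by
  rcases eq_or_ne x y with rfl | hxy
  · rfl
  have hswap : (x - y).val ≤ n / 2 ↔ n / 2 < (y - x).val := by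
    rw [← neg_sub y x]
    exact ZMod.val_neg_le_half_iff hn (sub_ne_zero.2 hxy.symm)
  unfold cycleSemilatticeOp
  by_cases h : (y - x).val ≤ n / 2
  · rw [if_pos h, if_neg (by omega)]
  · rw [if_neg h, if_pos (by omega)]

lemma left_absorb (x y : ZMod n) :
    cycleSemilatticeOp n x (cycleSemilatticeOp n x y) = cycleSemilatticeOp n x y := by
  by_cases h : (y - x).val ≤ n / 2
  · have hxy : cycleSemilatticeOp n x y = x := if_pos h
    rw [hxy, self]
  · have hxy : cycleSemilatticeOp n x y = y := if_neg h
    rw [hxy, hxy]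

end cycleSemilatticeOp

theorem stmt_6_general (n : ℕ) (hodd : Odd n)
    (f : ZMod n → ZMod n → ZMod n)
    (hdef : ∀ i j : ZMod n, f i j = if (j - i).val ≤ n / 2 then i else j) :
    (∀ a b c d : ZMod n, b = a + 1 → d = c + 1 → f b d = f a c + 1) ∧
    (∀ x : ZMod n, f x x = x) ∧
    (∀ x y : ZMod n, f x y = f y x) ∧
    (∀ x y : ZMod n, f x (f x y) = f x y) := by
  obtain rfl : f = cycleSemilatticeOp n := funext fun i => funext fun j => hdef i j
  refine ⟨?_, cycleSemilatticeOp.self, cycleSemilatticeOp.comm hodd,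
    cycleSemilatticeOp.left_absorb⟩
  rintro a _ c _ rfl rfl
  exact cycleSemilatticeOp.add_add a c 1

/-- For odd `n ≥ 1`, the directed cycle `C_n` admits a 2-semilattice polymorphism,
given concretely using the least nonnegative residue. -/
theorem stmt_6 (n : ℕ) (hn : 1 ≤ n) (hodd : Odd n)
    (f : ZMod n → ZMod n → ZMod n)
    (hdef : ∀ i j : ZMod n, f i j = if (j - i).val ≤ n / 2 then i else j) :
    (∀ a b c d : ZMod n, b = a + 1 → d = c + 1 → f b d = f a c + 1) ∧
    (∀ x : ZMod n, f x x = x) ∧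
    (∀ x y : ZMod n, f x y = f y x) ∧
    (∀ x y : ZMod n, f x (f x y) = f x y) :=
  stmt_6_general n hodd f hdef
end

section
/- Let G = (V,E) be a digraph with no loops, and let G^⊥⊤ be the two-sided extension of G obtained by adjoining a total source ⊥ and a total sink ⊤, i.e. the digraph with vertex set V ∪ {⊥,⊤} and edges E together with (⊥,v) for all v ∈ V ∪ {⊤} and (v,⊤) for all v ∈ V ∪ {⊥}. Let p be a ternary polymorphism of G^⊥⊤ satisfying p(x,y,y) = x for all x, y. Then: (1) for all a,b,c ∈ V ∪ {⊥}, a⁺ ⊆ p(a,b,c)⁺ (out-neighbourhoods in G^⊥⊤); (2) for all a,b,c ∈ V ∪ {⊤}, a⁻ ⊆ p(a,b,c)⁻; (3) if G is nondismantlable, then p(a,b,c) = a for all a,b,c ∈ V. -/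
/-- Lemma about ternary polymorphisms `p` of the two-sided extension `G^⊥⊤`
(modelled on `V ⊕ Bool`, with `Sum.inr false = ⊥` and `Sum.inr true = ⊤`)
satisfying `p (x,y,y) = x`. -/
theorem stmt_11 {V : Type*} (E : V → V → Prop) (hloop : ∀ v, ¬ E v v)
    (E₂ : V ⊕ Bool → V ⊕ Bool → Prop)
    (hE₂ : ∀ x y : V ⊕ Bool, E₂ x y ↔
      ((∃ u v, x = Sum.inl u ∧ y = Sum.inl v ∧ E u v) ∨
       (x = Sum.inr false ∧ y ≠ Sum.inr false) ∨
       (y = Sum.inr true ∧ x ≠ Sum.inr true)))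
    (p : V ⊕ Bool → V ⊕ Bool → V ⊕ Bool → V ⊕ Bool)
    (hp : ∀ a₁ a₂ a₃ b₁ b₂ b₃, E₂ a₁ b₁ → E₂ a₂ b₂ → E₂ a₃ b₃ →
      E₂ (p a₁ a₂ a₃) (p b₁ b₂ b₃))
    (hfst : ∀ x y, p x y y = x) :
    ((∀ a b c : V ⊕ Bool, a ≠ Sum.inr true → b ≠ Sum.inr true → c ≠ Sum.inr true →
        ∀ u, E₂ a u → E₂ (p a b c) u) ∧
     (∀ a b c : V ⊕ Bool, a ≠ Sum.inr false → b ≠ Sum.inr false → c ≠ Sum.inr false →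
        ∀ u, E₂ u a → E₂ u (p a b c)) ∧
     ((∀ v w : V, (∀ u, E v u → E w u) → (∀ u, E u v → E u w) → v = w) →
        ∀ a b c : V, p (Sum.inl a) (Sum.inl b) (Sum.inl c) = Sum.inl a)) := by
  have hTop : ∀ x : V ⊕ Bool, x ≠ Sum.inr true → E₂ x (Sum.inr true) := by
    intro x hx; rw [hE₂]; right; right; exact ⟨rfl, hx⟩
  have hBot : ∀ x : V ⊕ Bool, x ≠ Sum.inr false → E₂ (Sum.inr false) x := by
    intro x hx; rw [hE₂]; right; left; exact ⟨rfl, hx⟩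
  have h1 : ∀ a b c : V ⊕ Bool, a ≠ Sum.inr true → b ≠ Sum.inr true → c ≠ Sum.inr true →
      ∀ u, E₂ a u → E₂ (p a b c) u := by
    intro a b c ha hb hc u hu
    have := hp a b c u (Sum.inr true) (Sum.inr true) hu (hTop b hb) (hTop c hc)
    rwa [hfst] at this
  have h2 : ∀ a b c : V ⊕ Bool, a ≠ Sum.inr false → b ≠ Sum.inr false → c ≠ Sum.inr false →
      ∀ u, E₂ u a → E₂ u (p a b c) := by
    intro a b c ha hb hc u hu
    have := hp u (Sum.inr false) (Sum.inr false) a b c hu (hBot b hb) (hBot c hc)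
    rwa [hfst] at this
  refine ⟨h1, h2, ?_⟩
  intro hnd a b c
  set q := p (Sum.inl a) (Sum.inl b) (Sum.inl c) with hq
  have hqT : E₂ q (Sum.inr true) :=
    h1 _ _ _ (by simp) (by simp) (by simp) _ (hTop _ (by simp))
  have hqB : E₂ (Sum.inr false) q :=
    h2 _ _ _ (by simp) (by simp) (by simp) _ (hBot _ (by simp))
  obtain ⟨w, hw⟩ : ∃ w, q = Sum.inl w := by
    rcases hh : q with w | b'
    · exact ⟨w, rfl⟩
    · exfalso; cases b'
      · rw [hh, hE₂] at hqB
        rcases hqB with ⟨u, v, h, _⟩ | ⟨_, h⟩ | ⟨h, _⟩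
        · exact nomatch h
        · exact h rfl
        · exact nomatch h
      · rw [hh, hE₂] at hqT
        rcases hqT with ⟨u, v, _, h, _⟩ | ⟨h, _⟩ | ⟨_, h⟩
        · exact nomatch h
        · exact nomatch h
        · exact h rfl
  have hout : ∀ u, E a u → E w u := by
    intro u hu
    have h := h1 (Sum.inl a) (Sum.inl b) (Sum.inl c) (by simp) (by simp) (by simp)
      (Sum.inl u) (by rw [hE₂]; exact Or.inl ⟨a, u, rfl, rfl, hu⟩)
    rw [← hq, hw, hE₂] at h
    rcases h with ⟨u', v', h1', h2', h3'⟩ | ⟨h, _⟩ | ⟨h, _⟩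
    · cases h1'; cases h2'; exact h3'
    · exact absurd h (by simp)
    · exact absurd h (by simp)
  have hin : ∀ u, E u a → E u w := by
    intro u hu
    have h := h2 (Sum.inl a) (Sum.inl b) (Sum.inl c) (by simp) (by simp) (by simp)
      (Sum.inl u) (by rw [hE₂]; exact Or.inl ⟨u, a, rfl, rfl, hu⟩)
    rw [← hq, hw, hE₂] at h
    rcases h with ⟨u', v', h1', h2', h3'⟩ | ⟨h, _⟩ | ⟨h, _⟩
    · cases h1'; cases h2'; exact h3'
    · exact absurd h (by simp)
    · exact absurd h (by simp)
  rw [hw, hnd a w hout hin]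
end

section
/- Let G be a digraph and n ≥ 1. If G is congruence n-permutable (has ternary polymorphisms p₀,...,pₙ with p₀(x,y,z) = x, pᵢ(x,x,y) = p_{i+1}(x,y,y) for all i < n, and pₙ(x,y,z) = z), then the two-sided extension G^⊥⊤ is congruence (n+2)-permutable. -/
/-!
Send every triple that leaves `V` to `⊤` if it contains `⊤` and to `⊥` otherwise. As `⊤` has
no out-edges and `⊥` no in-edges, this extends each polymorphism of `G` to one of `G^⊥⊤`, and
since the value outside `V` is symmetric in the arguments, the extended operations still satisfy
`pᵢ(x,x,y) = pᵢ₊₁(x,y,y)`. Only the ends of the chain need repair: the extension of `p₀` is made to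
return `x` whenever `y = z`, that of `pₙ` to return `z` whenever `x = y`, and the two projections
are added as the new ends.
-/

/-- A digraph is congruence `n`-permutable if it has a chain of ternary polymorphisms
witnessing `n`-permutability. -/
def IsNPermutable {V : Type*} (E : V → V → Prop) (n : ℕ) : Prop :=
  ∃ p : Fin (n + 1) → V → V → V → V,
    (∀ i, ∀ a₁ a₂ a₃ b₁ b₂ b₃, E a₁ b₁ → E a₂ b₂ → E a₃ b₃ →
      E (p i a₁ a₂ a₃) (p i b₁ b₂ b₃)) ∧
    (∀ x y z, p 0 x y z = x) ∧
    (∀ i : Fin n, ∀ x y, p i.castSucc x x y = p i.succ x y y) ∧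
    (∀ x y z, p (Fin.last n) x y z = z)

section

variable {V : Type*}

def IsPolymorphism (E : V → V → Prop) (f : V → V → V → V) : Prop :=
  ∀ a₁ a₂ a₃ b₁ b₂ b₃, E a₁ b₁ → E a₂ b₂ → E a₃ b₃ → E (f a₁ a₂ a₃) (f b₁ b₂ b₃)

theorem isNPermutable_iff_nat (E : V → V → Prop) (n : ℕ) :
    IsNPermutable E n ↔ ∃ p : ℕ → V → V → V → V,
      (∀ k ≤ n, IsPolymorphism E (p k)) ∧ (∀ x y z, p 0 x y z = x) ∧
      (∀ k < n, ∀ x y, p k x x y = p (k + 1) x y y) ∧ (∀ x y z, p n x y z = z) := by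
  constructor
  · rintro ⟨p, hpoly, hfirst, hchain, hlast⟩
    refine ⟨fun k => p ⟨min k n, by omega⟩, fun k _ => hpoly _, ?_, ?_, ?_⟩
    · simpa using hfirst
    · intro k hk x y
      simpa [Nat.min_eq_left hk.le, Nat.min_eq_left hk] using hchain ⟨k, hk⟩ x y
    · intro x y z
      simp only [min_self]
      exact hlast x y z
  · rintro ⟨p, hpoly, hfirst, hchain, hlast⟩
    exact ⟨fun i => p i, fun i => hpoly i i.is_le, hfirst, fun i => hchain i i.isLt, hlast⟩

/-- The two-sided extension `E^⊥⊤` on `V ⊕ Bool`, with `⊥ = .inr false` and `⊤ = .inr true`. -/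
def TwoSidedExt (E : V → V → Prop) (x y : V ⊕ Bool) : Prop :=
  x ≠ .inr true ∧ y ≠ .inr false ∧ ∀ u v, x = .inl u → y = .inl v → E u v

theorem twoSidedExt_iff (E : V → V → Prop) (x y : V ⊕ Bool) :
    TwoSidedExt E x y ↔ (∃ u v, x = .inl u ∧ y = .inl v ∧ E u v) ∨
      (x = .inr false ∧ y ≠ .inr false) ∨ (y = .inr true ∧ x ≠ .inr true) := by
  rcases x with _ | (_ | _) <;> rcases y with _ | (_ | _) <;> simp [TwoSidedExt]

namespace TwoSidedExt

theorem isPolymorphism_of {E : V → V → Prop} {r : V ⊕ Bool → V ⊕ Bool → V ⊕ Bool → V ⊕ Bool}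
    (htop : ∀ x y z, x ≠ .inr true → y ≠ .inr true → z ≠ .inr true → r x y z ≠ .inr true)
    (hbot : ∀ x y z, x ≠ .inr false → y ≠ .inr false → z ≠ .inr false → r x y z ≠ .inr false)
    (hV : ∀ a₁ a₂ a₃ b₁ b₂ b₃, TwoSidedExt E a₁ b₁ → TwoSidedExt E a₂ b₂ → TwoSidedExt E a₃ b₃ →
      ∀ u v, r a₁ a₂ a₃ = .inl u → r b₁ b₂ b₃ = .inl v → E u v) :
    IsPolymorphism (TwoSidedExt E) r :=
  fun _ _ _ _ _ _ h₁ h₂ h₃ =>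
    ⟨htop _ _ _ h₁.1 h₂.1 h₃.1, hbot _ _ _ h₁.2.1 h₂.2.1 h₃.2.1, hV _ _ _ _ _ _ h₁ h₂ h₃⟩

def extendOp (f : V → V → V → V) : V ⊕ Bool → V ⊕ Bool → V ⊕ Bool → V ⊕ Bool
  | .inl u, .inl v, .inl w => .inl (f u v w)
  | .inr true, _, _ | _, .inr true, _ | _, _, .inr true => .inr true
  | _, _, _ => .inr false

section extendOp

variable (f : V → V → V → V)

theorem extendOp_ne_top {x y z : V ⊕ Bool} (hx : x ≠ .inr true) (hy : y ≠ .inr true)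
    (hz : z ≠ .inr true) : extendOp f x y z ≠ .inr true := by
  rcases x with _ | (_ | _) <;> rcases y with _ | (_ | _) <;> rcases z with _ | (_ | _) <;>
    simp_all [extendOp]

theorem extendOp_ne_bot {x y z : V ⊕ Bool} (hx : x ≠ .inr false) (hy : y ≠ .inr false)
    (hz : z ≠ .inr false) : extendOp f x y z ≠ .inr false := by
  rcases x with _ | (_ | _) <;> rcases y with _ | (_ | _) <;> rcases z with _ | (_ | _) <;>
    simp_all [extendOp]

theorem extendOp_eq_inl {x y z : V ⊕ Bool} {w : V} (h : extendOp f x y z = .inl w) :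
    ∃ u v t, x = .inl u ∧ y = .inl v ∧ z = .inl t ∧ w = f u v t := by
  rcases x with _ | (_ | _) <;> rcases y with _ | (_ | _) <;> rcases z with _ | (_ | _) <;>
    simp_all [extendOp]

theorem extendOp_self (x : V ⊕ Bool) (hf : ∀ u, f u u u = u) : extendOp f x x x = x := by
  rcases x with _ | (_ | _) <;> simp [extendOp, hf]

theorem extendOp_chain {g : V → V → V → V} (h : ∀ u v, f u u v = g u v v) (x y : V ⊕ Bool) :
    extendOp f x x y = extendOp g x y y := by
  rcases x with _ | (_ | _) <;> rcases y with _ | (_ | _) <;> simp [extendOp, h]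

theorem isPolymorphism_extendOp {E : V → V → Prop} (hf : IsPolymorphism E f) :
    IsPolymorphism (TwoSidedExt E) (extendOp f) := by
  refine isPolymorphism_of (fun _ _ _ => extendOp_ne_top f) (fun _ _ _ => extendOp_ne_bot f)
    fun a₁ a₂ a₃ b₁ b₂ b₃ h₁ h₂ h₃ u v ha hb => ?_
  obtain ⟨u₁, u₂, u₃, rfl, rfl, rfl, rfl⟩ := extendOp_eq_inl f ha
  obtain ⟨v₁, v₂, v₃, rfl, rfl, rfl, rfl⟩ := extendOp_eq_inl f hb
  exact hf _ _ _ _ _ _ (h₁.2.2 _ _ rfl rfl) (h₂.2.2 _ _ rfl rfl) (h₃.2.2 _ _ rfl rfl)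

end extendOp

open Classical in
noncomputable def firstOp (x y z : V ⊕ Bool) : V ⊕ Bool :=
  if y = z then x else extendOp (fun u _ _ => u) x y z

open Classical in
noncomputable def lastOp (x y z : V ⊕ Bool) : V ⊕ Bool :=
  if x = y then z else extendOp (fun _ _ w => w) x y z

theorem firstOp_xyy (x y : V ⊕ Bool) : firstOp x y y = x := if_pos rfl

theorem lastOp_xxy (x y : V ⊕ Bool) : lastOp x x y = y := if_pos rfl

theorem firstOp_xxy (x y : V ⊕ Bool) : firstOp x x y = extendOp (fun u _ _ => u) x x y := by
  by_cases h : x = y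
  · subst h
    rw [firstOp_xyy, extendOp_self _ _ fun _ => rfl]
  · exact if_neg h

theorem lastOp_xyy (x y : V ⊕ Bool) : lastOp x y y = extendOp (fun _ _ w => w) x y y := by
  by_cases h : x = y
  · subst h
    rw [lastOp_xxy, extendOp_self _ _ fun _ => rfl]
  · exact if_neg h

theorem isPolymorphism_firstOp (E : V → V → Prop) : IsPolymorphism (TwoSidedExt E) firstOp := by
  have eq_inl : ∀ {x y z : V ⊕ Bool} {w}, firstOp x y z = .inl w → x = .inl w := by
    intro x y z w h
    unfold firstOp at h
    split_ifs at h
    · exact h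
    · obtain ⟨u, v, t, rfl, -, -, rfl⟩ := extendOp_eq_inl _ h
      rfl
  refine isPolymorphism_of (fun x y z hx hy hz => ?_) (fun x y z hx hy hz => ?_)
    fun a₁ a₂ a₃ b₁ b₂ b₃ h₁ _ _ u v ha hb => h₁.2.2 u v (eq_inl ha) (eq_inl hb)
  all_goals unfold firstOp; split_ifs
  exacts [hx, extendOp_ne_top _ hx hy hz, hx, extendOp_ne_bot _ hx hy hz]

theorem isPolymorphism_lastOp (E : V → V → Prop) : IsPolymorphism (TwoSidedExt E) lastOp := by
  have eq_inl : ∀ {x y z : V ⊕ Bool} {w}, lastOp x y z = .inl w → z = .inl w := by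
    intro x y z w h
    unfold lastOp at h
    split_ifs at h
    · exact h
    · obtain ⟨u, v, t, -, -, rfl, rfl⟩ := extendOp_eq_inl _ h
      rfl
  refine isPolymorphism_of (fun x y z hx hy hz => ?_) (fun x y z hx hy hz => ?_)
    fun a₁ a₂ a₃ b₁ b₂ b₃ _ _ h₃ u v ha hb => h₃.2.2 u v (eq_inl ha) (eq_inl hb)
  all_goals unfold lastOp; split_ifs
  exacts [hz, extendOp_ne_top _ hx hy hz, hz, extendOp_ne_bot _ hx hy hz]

noncomputable def extChain (n : ℕ) (p : ℕ → V → V → V → V) :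
    ℕ → V ⊕ Bool → V ⊕ Bool → V ⊕ Bool → V ⊕ Bool
  | 0 => fun x _ _ => x
  | 1 => firstOp
  | k + 2 =>
    if k + 1 < n then extendOp (p (k + 1)) else if k + 1 = n then lastOp else fun _ _ z => z

section extChain

variable {n : ℕ} {p : ℕ → V → V → V → V}

theorem isPolymorphism_extChain {E : V → V → Prop} (hpoly : ∀ k ≤ n, IsPolymorphism E (p k)) :
    ∀ k, IsPolymorphism (TwoSidedExt E) (extChain n p k)
  | 0 => fun _ _ _ _ _ _ h₁ _ _ => h₁
  | 1 => isPolymorphism_firstOp E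
  | k + 2 => by
    simp only [extChain]
    split_ifs
    · exact isPolymorphism_extendOp _ (hpoly _ (by omega))
    · exact isPolymorphism_lastOp E
    · exact fun _ _ _ _ _ _ _ _ h₃ => h₃

theorem extChain_xxy (hfirst : ∀ x y z, p 0 x y z = x) {k : ℕ} (hk : k < n) (x y : V ⊕ Bool) :
    extChain n p (k + 1) x x y = extendOp (p k) x x y := by
  rcases k with _ | k
  · rw [show p 0 = fun u _ _ => u from funext₃ hfirst]
    exact firstOp_xxy x y
  · simp only [extChain, if_pos hk]

theorem extChain_xyy (hlast : ∀ x y z, p n x y z = z) {k : ℕ} (hk₁ : 1 ≤ k) (hk : k ≤ n)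
    (x y : V ⊕ Bool) : extChain n p (k + 1) x y y = extendOp (p k) x y y := by
  obtain ⟨j, rfl⟩ := Nat.exists_eq_add_of_le' hk₁
  rcases hk.lt_or_eq with hlt | rfl
  · simp only [extChain, if_pos hlt]
  · rw [show p (j + 1) = fun _ _ w => w from funext₃ hlast]
    simp only [extChain, lt_irrefl, if_false, if_true]
    exact lastOp_xyy x y

end extChain

end TwoSidedExt

open TwoSidedExt in
theorem IsNPermutable.twoSidedExt {E : V → V → Prop} {n : ℕ} (hn : 1 ≤ n)
    (h : IsNPermutable E n) : IsNPermutable (TwoSidedExt E) (n + 2) := by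
  obtain ⟨p, hpoly, hfirst, hchain, hlast⟩ := (isNPermutable_iff_nat E n).1 h
  refine (isNPermutable_iff_nat _ _).2
    ⟨extChain n p, fun k _ => isPolymorphism_extChain hpoly k, fun _ _ _ => rfl, ?_, ?_⟩
  · intro k hk x y
    rcases k with _ | k
    · exact (firstOp_xyy x y).symm
    rcases Nat.lt_or_ge k n with hkn | hkn
    · rw [extChain_xxy hfirst hkn, extendOp_chain _ (hchain k hkn),
        extChain_xyy hlast (by omega) hkn]
    · obtain rfl : k = n := by omega
      obtain ⟨m, rfl⟩ := Nat.exists_eq_add_of_le' hn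
      simp [extChain, lastOp_xxy]
  · intro x y z
    simp [extChain]

end

/-- If `G` is congruence `n`-permutable, then its two-sided extension `G^⊥⊤`
(modelled on `V ⊕ Bool` with `Sum.inr false = ⊥`, `Sum.inr true = ⊤`) is
congruence `(n+2)`-permutable. -/
theorem stmt_12 {V : Type*} (E : V → V → Prop) (n : ℕ) (hn : 1 ≤ n)
    (E₂ : V ⊕ Bool → V ⊕ Bool → Prop)
    (hE₂ : ∀ x y : V ⊕ Bool, E₂ x y ↔
      ((∃ u v, x = Sum.inl u ∧ y = Sum.inl v ∧ E u v) ∨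
       (x = Sum.inr false ∧ y ≠ Sum.inr false) ∨
       (y = Sum.inr true ∧ x ≠ Sum.inr true)))
    (h : IsNPermutable E n) :
    IsNPermutable E₂ (n + 2) := by
  obtain rfl : E₂ = TwoSidedExt E :=
    funext₂ fun x y => propext ((hE₂ x y).trans (twoSidedExt_iff E x y).symm)
  exact h.twoSidedExt hn
end

section
/- Let G be a nondismantlable digraph with no loops and n ≥ 1. If the two-sided extension G^⊥⊤ is congruence (n+2)-permutable, then G is congruence n-permutable. -/
/-!
An `(n+2)`-chain on `G^⊥⊤` restricts to an `n`-chain on `G`: every polymorphism of `G^⊥⊤` maps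
`V³` into `V`, since `⊥` has no in-neighbours and `⊤` no out-neighbours. Dropping the first and
last members of the chain, it remains to see that `p₁` and `pₙ₊₁` restrict to the first and the
third projection. For `p₁`, which satisfies `p₁(x,y,y) = x`, the edges `(u,⊤,⊤)` and `(u,⊥,⊥)`
show that `v⁺ ⊆ p₁(v,w,z)⁺` and `v⁻ ⊆ p₁(v,w,z)⁻`, so nondismantlability forces `p₁(v,w,z) = v`.
-/

open Sum

section

variable {V α : Type*}

/-- `G^⊥⊤` on `V ⊕ Bool`, with `inr false = ⊥` and `inr true = ⊤`. -/
def twoSidedExt (E : V → V → Prop) (x y : V ⊕ Bool) : Prop :=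
  (∃ u v, x = inl u ∧ y = inl v ∧ E u v) ∨
    (x = inr false ∧ y ≠ inr false) ∨ (y = inr true ∧ x ≠ inr true)

def IsTernaryPolymorphism (R : α → α → Prop) (f : α → α → α → α) : Prop :=
  ∀ a₁ a₂ a₃ b₁ b₂ b₃, R a₁ b₁ → R a₂ b₂ → R a₃ b₃ → R (f a₁ a₂ a₃) (f b₁ b₂ b₃)

theorem IsTernaryPolymorphism.swap {R : α → α → Prop} {f : α → α → α → α}
    (hf : IsTernaryPolymorphism R f) : IsTernaryPolymorphism R fun x y z => f z y x :=
  fun _ _ _ _ _ _ h₁ h₂ h₃ => hf _ _ _ _ _ _ h₃ h₂ h₁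

variable {E : V → V → Prop}

@[simp]
theorem twoSidedExt_inl_inl {u v : V} : twoSidedExt E (inl u) (inl v) ↔ E u v := by
  simp [twoSidedExt]

theorem twoSidedExt_bot_inl (v : V) : twoSidedExt E (inr false) (inl v) := by
  simp [twoSidedExt]

theorem twoSidedExt_inl_top (v : V) : twoSidedExt E (inl v) (inr true) := by
  simp [twoSidedExt]

theorem not_twoSidedExt_top_left (y : V ⊕ Bool) : ¬ twoSidedExt E (inr true) y := by
  simp [twoSidedExt]

theorem not_twoSidedExt_bot_right (x : V ⊕ Bool) : ¬ twoSidedExt E x (inr false) := by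
  simp [twoSidedExt]

theorem IsTernaryPolymorphism.exists_inl {f : (V ⊕ Bool) → (V ⊕ Bool) → (V ⊕ Bool) → V ⊕ Bool}
    (hf : IsTernaryPolymorphism (twoSidedExt E) f) (a b c : V) :
    ∃ v, f (inl a) (inl b) (inl c) = inl v := by
  rcases hv : f (inl a) (inl b) (inl c) with v | (_ | _)
  · exact ⟨v, rfl⟩
  · have := hf _ _ _ _ _ _ (twoSidedExt_bot_inl a) (twoSidedExt_bot_inl b)
      (twoSidedExt_bot_inl c)
    exact absurd (hv ▸ this) (not_twoSidedExt_bot_right _)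
  · have := hf _ _ _ _ _ _ (twoSidedExt_inl_top a) (twoSidedExt_inl_top b)
      (twoSidedExt_inl_top c)
    exact absurd (hv ▸ this) (not_twoSidedExt_top_left _)

/-- The fallback value `x` is never taken when `f` is a polymorphism of `twoSidedExt E`. -/
def restrictInl (f : (V ⊕ Bool) → (V ⊕ Bool) → (V ⊕ Bool) → V ⊕ Bool) (x y z : V) : V :=
  (f (inl x) (inl y) (inl z)).elim id fun _ => x

theorem inl_restrictInl {f : (V ⊕ Bool) → (V ⊕ Bool) → (V ⊕ Bool) → V ⊕ Bool}
    (hf : IsTernaryPolymorphism (twoSidedExt E) f) (x y z : V) :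
    inl (restrictInl f x y z) = f (inl x) (inl y) (inl z) := by
  obtain ⟨v, hv⟩ := hf.exists_inl x y z
  simp [restrictInl, hv]

theorem IsTernaryPolymorphism.restrictInl
    {f : (V ⊕ Bool) → (V ⊕ Bool) → (V ⊕ Bool) → V ⊕ Bool}
    (hf : IsTernaryPolymorphism (twoSidedExt E) f) :
    IsTernaryPolymorphism E (restrictInl f) := by
  intro a₁ a₂ a₃ b₁ b₂ b₃ h₁ h₂ h₃
  have := hf _ _ _ _ _ _ (twoSidedExt_inl_inl.2 h₁) (twoSidedExt_inl_inl.2 h₂)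
    (twoSidedExt_inl_inl.2 h₃)
  rwa [← inl_restrictInl hf, ← inl_restrictInl hf, twoSidedExt_inl_inl] at this

theorem restrictInl_eq_left
    (hnondis : ∀ v w : V, (∀ u, E v u → E w u) → (∀ u, E u v → E u w) → v = w)
    {f : (V ⊕ Bool) → (V ⊕ Bool) → (V ⊕ Bool) → V ⊕ Bool}
    (hf : IsTernaryPolymorphism (twoSidedExt E) f) (hfxyy : ∀ x y, f x y y = x) (x y z : V) :
    restrictInl f x y z = x := by
  refine (hnondis _ _ (fun u hu => ?_) (fun u hu => ?_)).symm
  · have := hf _ _ _ _ _ _ (twoSidedExt_inl_inl.2 hu) (twoSidedExt_inl_top y)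
      (twoSidedExt_inl_top z)
    rwa [hfxyy, ← inl_restrictInl hf, twoSidedExt_inl_inl] at this
  · have := hf _ _ _ _ _ _ (twoSidedExt_inl_inl.2 hu) (twoSidedExt_bot_inl y)
      (twoSidedExt_bot_inl z)
    rwa [hfxyy, ← inl_restrictInl hf, twoSidedExt_inl_inl] at this

theorem restrictInl_eq_right
    (hnondis : ∀ v w : V, (∀ u, E v u → E w u) → (∀ u, E u v → E u w) → v = w)
    {f : (V ⊕ Bool) → (V ⊕ Bool) → (V ⊕ Bool) → V ⊕ Bool}
    (hf : IsTernaryPolymorphism (twoSidedExt E) f) (hfxxy : ∀ x y, f x x y = y) (x y z : V) :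
    restrictInl f x y z = z := by
  apply inl_injective
  calc inl (restrictInl f x y z) = inl (restrictInl (fun x y z => f z y x) z y x) := by
        rw [inl_restrictInl hf, inl_restrictInl hf.swap]
    _ = inl z := by rw [restrictInl_eq_left hnondis hf.swap (fun x y => hfxxy y x)]

end

theorem stmt_13_general {V : Type*} (E : V → V → Prop) (n : ℕ)
    (hnondis : ∀ v w : V, (∀ u, E v u → E w u) → (∀ u, E u v → E u w) → v = w)
    (E₂ : V ⊕ Bool → V ⊕ Bool → Prop)
    (hE₂ : ∀ x y : V ⊕ Bool, E₂ x y ↔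
      ((∃ u v, x = Sum.inl u ∧ y = Sum.inl v ∧ E u v) ∨
       (x = Sum.inr false ∧ y ≠ Sum.inr false) ∨
       (y = Sum.inr true ∧ x ≠ Sum.inr true)))
    (h : IsNPermutable E₂ (n + 2)) :
    IsNPermutable E n := by
  obtain rfl : E₂ = twoSidedExt E := funext₂ fun x y => propext (hE₂ x y)
  obtain ⟨p, hpoly, hp0, hchain, hplast⟩ := h
  replace hpoly : ∀ i, IsTernaryPolymorphism (twoSidedExt E) (p i) := hpoly
  refine ⟨fun j => restrictInl (p j.succ.castSucc), fun j => (hpoly _).restrictInl, ?_, ?_, ?_⟩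
  · refine restrictInl_eq_left hnondis (hpoly _) fun x y => ?_
    exact (hchain 0 x y).symm.trans (hp0 x x y)
  · intro i x y
    apply inl_injective
    rw [inl_restrictInl (hpoly _), inl_restrictInl (hpoly _), ← Fin.succ_castSucc]
    exact hchain i.castSucc.succ (inl x) (inl y)
  · refine restrictInl_eq_right hnondis (hpoly _) fun x y => ?_
    exact (hchain (Fin.last _) x y).trans (hplast x y y)

/-- If `G` is nondismantlable, has no loops, and its two-sided extension `G^⊥⊤`
(modelled on `V ⊕ Bool` with `Sum.inr false = ⊥`, `Sum.inr true = ⊤`) is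
congruence `(n+2)`-permutable, then `G` is congruence `n`-permutable. -/
theorem stmt_13 {V : Type*} (E : V → V → Prop) (n : ℕ) (hn : 1 ≤ n)
    (hloop : ∀ v, ¬ E v v)
    (hnondis : ∀ v w : V, (∀ u, E v u → E w u) → (∀ u, E u v → E u w) → v = w)
    (E₂ : V ⊕ Bool → V ⊕ Bool → Prop)
    (hE₂ : ∀ x y : V ⊕ Bool, E₂ x y ↔
      ((∃ u v, x = Sum.inl u ∧ y = Sum.inl v ∧ E u v) ∨
       (x = Sum.inr false ∧ y ≠ Sum.inr false) ∨
       (y = Sum.inr true ∧ x ≠ Sum.inr true)))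
    (h : IsNPermutable E₂ (n + 2)) :
    IsNPermutable E n :=
  stmt_13_general E n hnondis E₂ hE₂ h
end

section
/- For n ≥ 2, the transitive tournament T_n on vertices {0,1,...,n−1} with edges i → j iff i < j is congruence n-permutable but not congruence (n−1)-permutable. -/
/-
Upper bound: the polymorphism `p i x y z := tournamentPoly n i x y z` is the median of `x`, `z`
and `x + z + c`, with a constant `c` depending on `i`, on the order of `x` and `z`, and on a
one-step tie-break in `y`. For `i = 0` the median is `x`, for `i = n` it is `z`, and the
tie-break is tuned so that `p i x x y = p (i + 1) x y y`. Along an edge `x + z` grows by at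
least `2` while the tie-break drops by at most `1`, so `p i` is a polymorphism.

Lower bound: given witnesses `p₀, …, pₘ` and a covering chain `v₀ ⋖ v₁ ⋖ ⋯ ⋖ vₘ`,
`pₘ₋ₖ(vₖ, vₖ₊₁, vₖ₊₁) ≥ vₖ₊₁` by induction on `k`, because
`pₘ₋ₖ₋₁(vₖ₊₁, vₖ₊₂, vₖ₊₂) > pₘ₋ₖ₋₁(vₖ, vₖ, vₖ₊₁) = pₘ₋ₖ(vₖ, vₖ₊₁, vₖ₊₁) ≥ vₖ₊₁`
and `vₖ₊₂` covers `vₖ₊₁`. At `k = m - 1` this contradicts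
`p₁(vₘ₋₁, vₘ, vₘ) = p₀(vₘ₋₁, vₘ₋₁, vₘ) = vₘ₋₁`. In `T_n` such a chain exists for `m = n - 1`.
-/

/- Truncated subtraction is harmless here: a negative third argument of the median would
have been replaced by `min x z` anyway. -/
def tournamentPoly (n i x y z : ℕ) : ℕ :=
  if x ≤ z then max x (min z (x + z + i + (if y < z then 1 else 0) - n))
  else min x (max z (x + z + 1 - (i + (if z < y then 1 else 0))))

theorem tournamentPoly_lt_tournamentPoly (n i : ℕ) {x y z x' y' z' : ℕ}
    (hx : x < x') (hy : y < y') (hz : z < z') :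
    tournamentPoly n i x y z < tournamentPoly n i x' y' z' := by
  unfold tournamentPoly
  split_ifs <;> omega

theorem tournamentPoly_le_max (n i x y z : ℕ) : tournamentPoly n i x y z ≤ max x z := by
  unfold tournamentPoly
  split_ifs <;> omega

theorem tournamentPoly_zero {n z : ℕ} (hz : z < n) (x y : ℕ) : tournamentPoly n 0 x y z = x := by
  unfold tournamentPoly
  split_ifs <;> omega

theorem tournamentPoly_self {n x : ℕ} (hx : x < n) (y z : ℕ) : tournamentPoly n n x y z = z := by
  unfold tournamentPoly
  split_ifs <;> omega

theorem tournamentPoly_succ (n i x y : ℕ) :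
    tournamentPoly n i x x y = tournamentPoly n (i + 1) x y y := by
  unfold tournamentPoly
  split_ifs <;> omega

theorem isNPermutable_fin_lt (n : ℕ) : IsNPermutable (fun i j : Fin n => i < j) n :=
  ⟨fun i x y z => ⟨tournamentPoly n i x y z,
      (tournamentPoly_le_max n i x y z).trans_lt (max_lt x.isLt z.isLt)⟩,
    fun i _ _ _ _ _ _ => tournamentPoly_lt_tournamentPoly n i,
    fun x y z => Fin.ext (tournamentPoly_zero z.isLt x y),
    fun i x y => Fin.ext (tournamentPoly_succ n i x y),
    fun x y z => Fin.ext (tournamentPoly_self x.isLt y z)⟩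

theorem not_isNPermutable_of_covBy {V : Type*} [LinearOrder V] {m : ℕ} (hm : 0 < m)
    (v : ℕ → V) (hv : ∀ k < m, v k ⋖ v (k + 1)) :
    ¬ IsNPermutable (fun a b : V => a < b) m := by
  rintro ⟨p, hpoly, hfirst, hchain, hlast⟩
  obtain ⟨m, rfl⟩ : ∃ m', m = m' + 1 := ⟨m - 1, by omega⟩
  have climb : ∀ k ≤ m, ∀ hk : m + 1 - k < m + 2,
      v (k + 1) ≤ p ⟨m + 1 - k, hk⟩ (v k) (v (k + 1)) (v (k + 1)) := by
    intro k
    induction k with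
    | zero =>
      intro _ hk
      have hidx : (⟨m + 1 - 0, hk⟩ : Fin (m + 2)) = Fin.last (m + 1) := rfl
      rw [hidx, hlast]
    | succ k ih =>
      intro hkm hk
      set i : Fin (m + 1) := ⟨m - k, by omega⟩
      have hsucc : i.succ = ⟨m + 1 - k, by omega⟩ := by ext; simp [i]; omega
      have hcast : i.castSucc = ⟨m + 1 - (k + 1), hk⟩ := by ext; simp [i]
      have hstep : p i.castSucc (v k) (v k) (v (k + 1)) <
          p i.castSucc (v (k + 1)) (v (k + 2)) (v (k + 2)) :=
        hpoly _ _ _ _ _ _ _ (hv k (by omega)).lt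
          ((hv k (by omega)).lt.trans (hv (k + 1) (by omega)).lt) (hv (k + 1) (by omega)).lt
      rw [← hcast]
      refine (hv (k + 1) (by omega)).ge_of_gt (lt_of_le_of_lt ?_ hstep)
      rw [hchain, hsucc]
      exact ih (by omega) (by omega)
  have hlt : v m < v (m + 1) := (hv m (by omega)).lt
  have h1 : ((0 : Fin (m + 1)).succ) = ⟨m + 1 - m, by omega⟩ := by ext; simp
  have htop := climb m le_rfl (by omega)
  rw [← h1, ← hchain, Fin.castSucc_zero, hfirst] at htop
  exact hlt.not_ge htop

theorem not_isNPermutable_fin_lt {m n : ℕ} (hm : 0 < m) (hmn : m < n) :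
    ¬ IsNPermutable (fun i j : Fin n => i < j) m :=
  not_isNPermutable_of_covBy hm (fun k => ⟨min k (n - 1), by omega⟩) fun k hk => by
    simp only [Fin.covBy_iff, Nat.covBy_iff_add_one_eq]
    omega

/-- For `n ≥ 2` the transitive tournament `T_n` is congruence `n`-permutable but not
congruence `(n-1)`-permutable. -/
theorem stmt_14 (n : ℕ) (hn : 2 ≤ n) :
    IsNPermutable (fun i j : Fin n => i < j) n ∧
    ¬ IsNPermutable (fun i j : Fin n => i < j) (n - 1) :=
  ⟨isNPermutable_fin_lt n, not_isNPermutable_fin_lt (by omega) (by omega)⟩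
end

section
/- For n ≥ 2, the digraph C_n^⊥⊤ obtained from the directed n-cycle by adjoining a total source ⊥ and total sink ⊤ has a majority polymorphism. Concretely, extend the majority polymorphism m of C_n (which returns the middle/majority rule on the cycle) to m' on C_n ∪ {⊥,⊤} by: m'(a,b,c) = m(a,b,c) if a,b,c all lie in C_n; m'(a,b,c) = the repeated value if two of a,b,c coincide; m'(a,b,c) = ⊥ if a,b,c are pairwise distinct and ⊥ ∈ {a,b,c}; and m'(a,b,c) = ⊤ if a,b,c are pairwise distinct, not all in C_n, and ⊥ ∉ {a,b,c}. Then m' is a majority polymorphism of C_n^⊥⊤. -/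
/-!
Majority fixes triples with a repeated entry, and a pairwise distinct triple off the cycle goes
to `⊥` if it contains `⊥` and to `⊤` otherwise. Hence `m'` keeps triples of edge targets (which
avoid `⊥`) away from `⊥` and triples of edge sources (which avoid `⊤`) away from `⊤`; as `⊥` is a
source and `⊤` a sink of every other vertex, only an edge between two cycle values
`m' a = u`, `m' b = u'` needs an argument. Each such value comes either from a triple on the
cycle, where `m'` is `m`, or from two entries equal to it. Since `m` commutes with the successor
and is a majority operation, and two 2-element subsets of three positions meet, every
combination yields `u' = u + 1`.
-/

open Function Sum

variable {α : Type*}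

def TwoOfThree (p q r : Prop) : Prop := (p ∧ q) ∨ (q ∧ r) ∨ (p ∧ r)

namespace TwoOfThree

variable {p q r p' q' r' : Prop}

theorem mono (hp : p → p') (hq : q → q') (hr : r → r') :
    TwoOfThree p q r → TwoOfThree p' q' r' := by
  unfold TwoOfThree; tauto

theorem exists_common (h : TwoOfThree p q r) (h' : TwoOfThree p' q' r') :
    (p ∧ p') ∨ (q ∧ q') ∨ (r ∧ r') := by
  unfold TwoOfThree at h h'; tauto

end TwoOfThree

section CycleMajority

variable [DecidableEq α]

def cycleMajority (a b c : α) : α :=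
  if (a = b ∧ b = c) ∨ (a ≠ b ∧ b ≠ c ∧ a ≠ c) then a
  else if a = b then a else if b = c then b else a

theorem cycleMajority_eq_of_twoOfThree {a b c v : α}
    (h : TwoOfThree (a = v) (b = v) (c = v)) : cycleMajority a b c = v := by
  unfold cycleMajority
  rcases h with ⟨rfl, rfl⟩ | ⟨rfl, rfl⟩ | ⟨rfl, rfl⟩ <;> split_ifs <;> tauto

theorem cycleMajority_map {s : α → α} (hs : Injective s) (a b c : α) :
    cycleMajority (s a) (s b) (s c) = s (cycleMajority a b c) := by
  simp only [cycleMajority, hs.eq_iff, ne_eq]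
  split_ifs <;> rfl

end CycleMajority

section BotTop

/-- The functional digraph `u → s u` on `α` with a total source `inr false` and a total sink
`inr true` adjoined; for `s = (· + 1)` on `ZMod n` this is `C_n^⊥⊤`. -/
def botTopAdj (s : α → α) (x y : α ⊕ Bool) : Prop :=
  (∃ u v : α, x = inl u ∧ y = inl v ∧ v = s u) ∨
    (x = inr false ∧ y ≠ inr false) ∨ (y = inr true ∧ x ≠ inr true)

variable {s : α → α} {x y : α ⊕ Bool}

theorem botTopAdj_inl_inl_iff {u v : α} : botTopAdj s (inl u) (inl v) ↔ v = s u := by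
  simp [botTopAdj]

theorem ne_top_of_botTopAdj (h : botTopAdj s x y) : x ≠ inr true := by
  rcases h with ⟨u, v, rfl, -, -⟩ | ⟨rfl, -⟩ | ⟨-, h⟩ <;> simp [*]

theorem ne_bot_of_botTopAdj (h : botTopAdj s x y) : y ≠ inr false := by
  rcases h with ⟨u, v, -, rfl, -⟩ | ⟨-, h⟩ | ⟨rfl, -⟩ <;> simp [*]

theorem exists_eq_inl_of_ne (hbot : x ≠ inr false) (htop : x ≠ inr true) :
    ∃ a, x = inl a := by
  rcases x with a | _ | _
  exacts [⟨a, rfl⟩, absurd rfl hbot, absurd rfl htop]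

theorem botTopAdj_bot (hy : y ≠ inr false) : botTopAdj s (inr false) y :=
  .inr (.inl ⟨rfl, hy⟩)

theorem botTopAdj_top (hx : x ≠ inr true) : botTopAdj s x (inr true) :=
  .inr (.inr ⟨rfl, hx⟩)

end BotTop

/-- `m'` is the extension of `m` from the statement, with `⊥ = inr false` and `⊤ = inr true`. -/
structure IsBotTopExtension (m : α → α → α → α)
    (m' : α ⊕ Bool → α ⊕ Bool → α ⊕ Bool → α ⊕ Bool) : Prop where
  inl_inl_inl : ∀ a b c : α, m' (inl a) (inl b) (inl c) = inl (m a b c)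
  majority : ∀ x y : α ⊕ Bool, m' x x y = x ∧ m' x y x = x ∧ m' y x x = x
  bot : ∀ a b c : α ⊕ Bool, a ≠ b → b ≠ c → a ≠ c →
    (a = inr false ∨ b = inr false ∨ c = inr false) → m' a b c = inr false
  top : ∀ a b c : α ⊕ Bool, a ≠ b → b ≠ c → a ≠ c →
    ¬ (∃ a' b' c' : α, a = inl a' ∧ b = inl b' ∧ c = inl c') →
    (a ≠ inr false ∧ b ≠ inr false ∧ c ≠ inr false) → m' a b c = inr true

namespace IsBotTopExtension

variable {m : α → α → α → α} {m' : α ⊕ Bool → α ⊕ Bool → α ⊕ Bool → α ⊕ Bool}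

theorem eq_cases (h : IsBotTopExtension m m') (x y z : α ⊕ Bool) :
    (m' x y z = x ∧ (x = y ∨ x = z)) ∨ (m' x y z = y ∧ y = z) ∨
    (∃ a b c : α, x = inl a ∧ y = inl b ∧ z = inl c ∧ m' x y z = inl (m a b c)) ∨
    (m' x y z = inr false ∧ (x = inr false ∨ y = inr false ∨ z = inr false)) ∨
    (m' x y z = inr true ∧ ¬ (∃ a b c : α, x = inl a ∧ y = inl b ∧ z = inl c) ∧
      x ≠ inr false ∧ y ≠ inr false ∧ z ≠ inr false) := by
  by_cases exy : x = y
  · subst exy; exact .inl ⟨(h.majority x z).1, .inl rfl⟩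
  by_cases eyz : y = z
  · subst eyz; exact .inr (.inl ⟨(h.majority y x).2.2, rfl⟩)
  by_cases exz : x = z
  · subst exz; exact .inl ⟨(h.majority x y).2.1, .inr rfl⟩
  by_cases hinl : ∃ a b c : α, x = inl a ∧ y = inl b ∧ z = inl c
  · obtain ⟨a, b, c, rfl, rfl, rfl⟩ := hinl
    exact .inr (.inr (.inl ⟨a, b, c, rfl, rfl, rfl, h.inl_inl_inl a b c⟩))
  by_cases hbot : x = inr false ∨ y = inr false ∨ z = inr false
  · exact .inr (.inr (.inr (.inl ⟨h.bot x y z exy eyz exz hbot, hbot⟩)))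
  · simp only [not_or] at hbot
    exact .inr (.inr (.inr (.inr ⟨h.top x y z exy eyz exz hinl hbot, hinl, hbot⟩)))

theorem ne_bot (h : IsBotTopExtension m m') {x y z : α ⊕ Bool} (hx : x ≠ inr false)
    (hy : y ≠ inr false) (hz : z ≠ inr false) : m' x y z ≠ inr false := by
  rcases h.eq_cases x y z with ⟨e, -⟩ | ⟨e, -⟩ | ⟨_, _, _, -, -, -, e⟩ | ⟨-, hb⟩ | ⟨e, -⟩
  · rwa [e]
  · rwa [e]
  · simp [e]
  · rcases hb with rfl | rfl | rfl <;> contradiction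
  · simp [e]

theorem ne_top (h : IsBotTopExtension m m') {x y z : α ⊕ Bool} (hx : x ≠ inr true)
    (hy : y ≠ inr true) (hz : z ≠ inr true) : m' x y z ≠ inr true := by
  rcases h.eq_cases x y z with ⟨e, -⟩ | ⟨e, -⟩ | ⟨_, _, _, -, -, -, e⟩ | ⟨e, -⟩ |
    ⟨-, hinl, hx', hy', hz'⟩
  · rwa [e]
  · rwa [e]
  · simp [e]
  · simp [e]
  · obtain ⟨a, rfl⟩ := exists_eq_inl_of_ne hx' hx
    obtain ⟨b, rfl⟩ := exists_eq_inl_of_ne hy' hy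
    obtain ⟨c, rfl⟩ := exists_eq_inl_of_ne hz' hz
    exact absurd ⟨a, b, c, rfl, rfl, rfl⟩ hinl

theorem eq_inl (h : IsBotTopExtension m m') {x y z : α ⊕ Bool} {t : α}
    (ht : m' x y z = inl t) :
    (∃ a b c : α, x = inl a ∧ y = inl b ∧ z = inl c ∧ m a b c = t) ∨
      TwoOfThree (x = inl t) (y = inl t) (z = inl t) := by
  rcases h.eq_cases x y z with ⟨e, rfl | rfl⟩ | ⟨e, rfl⟩ | ⟨a, b, c, rfl, rfl, rfl, e⟩ | ⟨e, -⟩ |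
    ⟨e, -⟩
  · exact .inr (.inl ⟨e ▸ ht, e ▸ ht⟩)
  · exact .inr (.inr (.inr ⟨e ▸ ht, e ▸ ht⟩))
  · exact .inr (.inr (.inl ⟨e ▸ ht, e ▸ ht⟩))
  · exact .inl ⟨a, b, c, rfl, rfl, rfl, inl_injective (e.symm.trans ht)⟩
  all_goals simp [e] at ht

end IsBotTopExtension

section Polymorphism

variable [DecidableEq α] {s : α → α} {m' : α ⊕ Bool → α ⊕ Bool → α ⊕ Bool → α ⊕ Bool}
  {a₁ a₂ a₃ b₁ b₂ b₃ : α ⊕ Bool}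

theorem IsBotTopExtension.eq_succ_of_botTopAdj (hs : Injective s)
    (h : IsBotTopExtension cycleMajority m') (h₁ : botTopAdj s a₁ b₁)
    (h₂ : botTopAdj s a₂ b₂) (h₃ : botTopAdj s a₃ b₃) {u u' : α}
    (hu : m' a₁ a₂ a₃ = inl u) (hu' : m' b₁ b₂ b₃ = inl u') : u' = s u := by
  have succ_of_inl_left {a b t} (hab : botTopAdj s a (inl b)) (ha : a = inl t) : b = s t := by
    rwa [ha, botTopAdj_inl_inl_iff] at hab
  have succ_of_inl_right {a b t} (hab : botTopAdj s (inl a) b) (hb : b = inl t) : t = s a := by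
    rwa [hb, botTopAdj_inl_inl_iff] at hab
  rcases h.eq_inl hu with ⟨x₁, x₂, x₃, rfl, rfl, rfl, rfl⟩ | ha <;>
    rcases h.eq_inl hu' with ⟨y₁, y₂, y₃, rfl, rfl, rfl, rfl⟩ | hb
  · rw [botTopAdj_inl_inl_iff] at h₁ h₂ h₃
    rw [h₁, h₂, h₃, cycleMajority_map hs]
  · rw [← cycleMajority_map hs]
    exact (cycleMajority_eq_of_twoOfThree <| hb.mono (fun e ↦ (succ_of_inl_right h₁ e).symm)
      (fun e ↦ (succ_of_inl_right h₂ e).symm) (fun e ↦ (succ_of_inl_right h₃ e).symm)).symm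
  · exact cycleMajority_eq_of_twoOfThree <| ha.mono (succ_of_inl_left h₁)
      (succ_of_inl_left h₂) (succ_of_inl_left h₃)
  · rcases ha.exists_common hb with ⟨ea, eb⟩ | ⟨ea, eb⟩ | ⟨ea, eb⟩
    · exact succ_of_inl_left (eb ▸ h₁) ea
    · exact succ_of_inl_left (eb ▸ h₂) ea
    · exact succ_of_inl_left (eb ▸ h₃) ea

theorem IsBotTopExtension.botTopAdj_map (hs : Injective s)
    (h : IsBotTopExtension cycleMajority m') (h₁ : botTopAdj s a₁ b₁)
    (h₂ : botTopAdj s a₂ b₂) (h₃ : botTopAdj s a₃ b₃) :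
    botTopAdj s (m' a₁ a₂ a₃) (m' b₁ b₂ b₃) := by
  have hb_ne_bot := h.ne_bot (ne_bot_of_botTopAdj h₁) (ne_bot_of_botTopAdj h₂) (ne_bot_of_botTopAdj h₃)
  have ha_ne_top := h.ne_top (ne_top_of_botTopAdj h₁) (ne_top_of_botTopAdj h₂) (ne_top_of_botTopAdj h₃)
  by_cases hbot : m' a₁ a₂ a₃ = inr false
  · rw [hbot]; exact botTopAdj_bot hb_ne_bot
  by_cases htop : m' b₁ b₂ b₃ = inr true
  · rw [htop]; exact botTopAdj_top ha_ne_top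
  obtain ⟨u, hu⟩ := exists_eq_inl_of_ne hbot ha_ne_top
  obtain ⟨u', hu'⟩ := exists_eq_inl_of_ne hb_ne_bot htop
  rw [hu, hu', botTopAdj_inl_inl_iff]
  exact h.eq_succ_of_botTopAdj hs h₁ h₂ h₃ hu hu'

end Polymorphism

theorem stmt_18_general (n : ℕ)
    (E₂ : ZMod n ⊕ Bool → ZMod n ⊕ Bool → Prop)
    (hE₂ : ∀ x y : ZMod n ⊕ Bool, E₂ x y ↔
      ((∃ u v : ZMod n, x = Sum.inl u ∧ y = Sum.inl v ∧ v = u + 1) ∨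
       (x = Sum.inr false ∧ y ≠ Sum.inr false) ∨
       (y = Sum.inr true ∧ x ≠ Sum.inr true)))
    -- the majority polymorphism m of C_n
    (m : ZMod n → ZMod n → ZMod n → ZMod n)
    (hm : ∀ a b c : ZMod n, m a b c =
      if (a = b ∧ b = c) ∨ (a ≠ b ∧ b ≠ c ∧ a ≠ c) then a
      else if a = b then a else if b = c then b else a)
    -- the extension m' of m to C_n^⊥⊤
    (m' : ZMod n ⊕ Bool → ZMod n ⊕ Bool → ZMod n ⊕ Bool → ZMod n ⊕ Bool)
    (hm'cyc : ∀ a b c : ZMod n,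
      m' (Sum.inl a) (Sum.inl b) (Sum.inl c) = Sum.inl (m a b c))
    (hm'maj : ∀ x y : ZMod n ⊕ Bool, m' x x y = x ∧ m' x y x = x ∧ m' y x x = x)
    (hm'bot : ∀ a b c : ZMod n ⊕ Bool, a ≠ b → b ≠ c → a ≠ c →
      (a = Sum.inr false ∨ b = Sum.inr false ∨ c = Sum.inr false) →
      m' a b c = Sum.inr false)
    (hm'top : ∀ a b c : ZMod n ⊕ Bool, a ≠ b → b ≠ c → a ≠ c →
      ¬ (∃ a' b' c' : ZMod n, a = Sum.inl a' ∧ b = Sum.inl b' ∧ c = Sum.inl c') →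
      (a ≠ Sum.inr false ∧ b ≠ Sum.inr false ∧ c ≠ Sum.inr false) →
      m' a b c = Sum.inr true) :
    (∀ a₁ a₂ a₃ b₁ b₂ b₃, E₂ a₁ b₁ → E₂ a₂ b₂ → E₂ a₃ b₃ →
      E₂ (m' a₁ a₂ a₃) (m' b₁ b₂ b₃)) ∧
    (∀ x y : ZMod n ⊕ Bool, m' y x x = x ∧ m' x y x = x ∧ m' x x y = x) := by
  obtain rfl : E₂ = botTopAdj (· + 1) := funext fun x ↦ funext fun y ↦ propext (hE₂ x y)
  obtain rfl : m = cycleMajority := funext fun a ↦ funext fun b ↦ funext (hm a b)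
  have h : IsBotTopExtension cycleMajority m' := ⟨hm'cyc, hm'maj, hm'bot, hm'top⟩
  refine ⟨fun _ _ _ _ _ _ ↦ h.botTopAdj_map (add_left_injective 1), fun x y ↦ ?_⟩
  exact ⟨(hm'maj x y).2.2, (hm'maj x y).2.1, (hm'maj x y).1⟩

/-- For `n ≥ 2`, the digraph `C_n^⊥⊤` (the directed `n`-cycle with a total source `⊥`
and total sink `⊤` adjoined, modelled on `ZMod n ⊕ Bool` with `Sum.inr false = ⊥`
and `Sum.inr true = ⊤`) has a majority polymorphism; concretely, the extension `m'`
of the majority polymorphism `m` of `C_n` described below is one. -/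
theorem stmt_18 (n : ℕ) (hn : 2 ≤ n)
    (E₂ : ZMod n ⊕ Bool → ZMod n ⊕ Bool → Prop)
    (hE₂ : ∀ x y : ZMod n ⊕ Bool, E₂ x y ↔
      ((∃ u v : ZMod n, x = Sum.inl u ∧ y = Sum.inl v ∧ v = u + 1) ∨
       (x = Sum.inr false ∧ y ≠ Sum.inr false) ∨
       (y = Sum.inr true ∧ x ≠ Sum.inr true)))
    -- the majority polymorphism m of C_n
    (m : ZMod n → ZMod n → ZMod n → ZMod n)
    (hm : ∀ a b c : ZMod n, m a b c =
      if (a = b ∧ b = c) ∨ (a ≠ b ∧ b ≠ c ∧ a ≠ c) then a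
      else if a = b then a else if b = c then b else a)
    -- the extension m' of m to C_n^⊥⊤
    (m' : ZMod n ⊕ Bool → ZMod n ⊕ Bool → ZMod n ⊕ Bool → ZMod n ⊕ Bool)
    (hm'cyc : ∀ a b c : ZMod n,
      m' (Sum.inl a) (Sum.inl b) (Sum.inl c) = Sum.inl (m a b c))
    (hm'maj : ∀ x y : ZMod n ⊕ Bool, m' x x y = x ∧ m' x y x = x ∧ m' y x x = x)
    (hm'bot : ∀ a b c : ZMod n ⊕ Bool, a ≠ b → b ≠ c → a ≠ c →
      (a = Sum.inr false ∨ b = Sum.inr false ∨ c = Sum.inr false) →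
      m' a b c = Sum.inr false)
    (hm'top : ∀ a b c : ZMod n ⊕ Bool, a ≠ b → b ≠ c → a ≠ c →
      ¬ (∃ a' b' c' : ZMod n, a = Sum.inl a' ∧ b = Sum.inl b' ∧ c = Sum.inl c') →
      (a ≠ Sum.inr false ∧ b ≠ Sum.inr false ∧ c ≠ Sum.inr false) →
      m' a b c = Sum.inr true) :
    (∀ a₁ a₂ a₃ b₁ b₂ b₃, E₂ a₁ b₁ → E₂ a₂ b₂ → E₂ a₃ b₃ →
      E₂ (m' a₁ a₂ a₃) (m' b₁ b₂ b₃)) ∧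
    (∀ x y : ZMod n ⊕ Bool, m' y x x = x ∧ m' x y x = x ∧ m' x x y = x) :=
  stmt_18_general n E₂ hE₂ m hm m' hm'cyc hm'maj hm'bot hm'top
end
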